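/- Let H be a Hopf algebra with invertible antipode, and let M and N be H-Hopf bimodules. Equip M ⊗_H N with the H-bimodule structure coming from the left module structure of M and the right module structure of N, and with the H-bicomodule structure arising from the tensor product of bicomodules. Then these comodule structure maps are well defined on the quotient M ⊗_H N (i.e., the map M ⊗ N → H ⊗ (M ⊗_H N) induced by the tensor-product left coaction factors through M ⊗_H N, and similarly on the right), and with these structures M ⊗_H N is an H-Hopf bimodule. -/
import Mathlib


/-!
STATEMENT 2: For a Hopf algebra `H` with invertible antipode and `H`-Hopf bimodules
`M`, `N`, the bimodule structure on `M ⊗_H N` coming from the left structure of `M`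
and the right structure of `N`, together with the bicomodule structure arising from
the tensor product of bicomodules, is well defined (the tensor-product coactions
factor through the quotient `M ⊗_H N` of `M ⊗ N`), and makes `M ⊗_H N` an
`H`-Hopf bimodule.
-/

noncomputable section

open TensorProduct

/-- An `H`-Hopf bimodule structure on `M`: an `H`-bimodule and `H`-bicomodule
structure such that both coactions are morphisms of `H`-bimodules. -/
structure HopfBimoduleStr (K H M : Type) [CommRing K] [Ring H] [HopfAlgebra K H]
    [AddCommGroup M] [Module K M] where
  actL : H ⊗[K] M →ₗ[K] M
  actR : M ⊗[K] H →ₗ[K] M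
  coactL : M →ₗ[K] H ⊗[K] M
  coactR : M →ₗ[K] M ⊗[K] H
  actL_one : ∀ m : M, actL ((1 : H) ⊗ₜ[K] m) = m
  actL_mul : ∀ (h h' : H) (m : M), actL (h ⊗ₜ[K] actL (h' ⊗ₜ[K] m)) = actL ((h * h') ⊗ₜ[K] m)
  actR_one : ∀ m : M, actR (m ⊗ₜ[K] (1 : H)) = m
  actR_mul : ∀ (m : M) (h h' : H), actR (actR (m ⊗ₜ[K] h) ⊗ₜ[K] h') = actR (m ⊗ₜ[K] (h * h'))
  act_comm : ∀ (h : H) (m : M) (h' : H),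
    actR (actL (h ⊗ₜ[K] m) ⊗ₜ[K] h') = actL (h ⊗ₜ[K] actR (m ⊗ₜ[K] h'))
  coactL_counit :
    (TensorProduct.lid K M).toLinearMap ∘ₗ
      (LinearMap.rTensor M (Coalgebra.counit (R := K) (A := H))) ∘ₗ coactL = LinearMap.id
  coactR_counit :
    (TensorProduct.rid K M).toLinearMap ∘ₗ
      (LinearMap.lTensor M (Coalgebra.counit (R := K) (A := H))) ∘ₗ coactR = LinearMap.id
  coactL_coassoc :
    (LinearMap.rTensor M (Coalgebra.comul (R := K) (A := H))) ∘ₗ coactL =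
      (TensorProduct.assoc K H H M).symm.toLinearMap ∘ₗ
        (LinearMap.lTensor H coactL) ∘ₗ coactL
  coactR_coassoc :
    (LinearMap.lTensor M (Coalgebra.comul (R := K) (A := H))) ∘ₗ coactR =
      (TensorProduct.assoc K M H H).toLinearMap ∘ₗ (LinearMap.rTensor H coactR) ∘ₗ coactR
  coact_comm :
    (LinearMap.lTensor H coactR) ∘ₗ coactL =
      (TensorProduct.assoc K H M H).toLinearMap ∘ₗ (LinearMap.rTensor H coactL) ∘ₗ coactR
  -- `coactL` is a morphism of `H`-bimodules
  coactL_actL : coactL ∘ₗ actL =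
    (TensorProduct.map (LinearMap.mul' K H) actL) ∘ₗ
      (TensorProduct.tensorTensorTensorComm K H H H M).toLinearMap ∘ₗ
        (TensorProduct.map (Coalgebra.comul (R := K) (A := H)) coactL)
  coactL_actR : coactL ∘ₗ actR =
    (TensorProduct.map (LinearMap.mul' K H) actR) ∘ₗ
      (TensorProduct.tensorTensorTensorComm K H M H H).toLinearMap ∘ₗ
        (TensorProduct.map coactL (Coalgebra.comul (R := K) (A := H)))
  -- `coactR` is a morphism of `H`-bimodules
  coactR_actL : coactR ∘ₗ actL =
    (TensorProduct.map actL (LinearMap.mul' K H)) ∘ₗ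
      (TensorProduct.tensorTensorTensorComm K H H M H).toLinearMap ∘ₗ
        (TensorProduct.map (Coalgebra.comul (R := K) (A := H)) coactR)
  coactR_actR : coactR ∘ₗ actR =
    (TensorProduct.map actR (LinearMap.mul' K H)) ∘ₗ
      (TensorProduct.tensorTensorTensorComm K M H H H).toLinearMap ∘ₗ
        (TensorProduct.map coactR (Coalgebra.comul (R := K) (A := H)))

variable {K H M N : Type} [CommRing K] [Ring H] [HopfAlgebra K H]
  [AddCommGroup M] [Module K M] [AddCommGroup N] [Module K N]

/-- The defining relations of `M ⊗_H N` inside `M ⊗ N` : `mh ⊗ n - m ⊗ hn`. -/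
def tensorOverHRel (SM : HopfBimoduleStr K H M) (SN : HopfBimoduleStr K H N) :
    Submodule K (M ⊗[K] N) :=
  Submodule.span K
    {x | ∃ (m : M) (h : H) (n : N),
      x = SM.actR (m ⊗ₜ[K] h) ⊗ₜ[K] n - m ⊗ₜ[K] SN.actL (h ⊗ₜ[K] n)}

/-- The tensor-product left coaction on `M ⊗ N`:
`m ⊗ n ↦ Σ m₍₋₁₎n₍₋₁₎ ⊗ (m₍₀₎ ⊗ n₍₀₎)`. -/
def tensorCoactL (SM : HopfBimoduleStr K H M) (SN : HopfBimoduleStr K H N) :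
    M ⊗[K] N →ₗ[K] H ⊗[K] (M ⊗[K] N) :=
  (TensorProduct.map (LinearMap.mul' K H) LinearMap.id) ∘ₗ
    (TensorProduct.tensorTensorTensorComm K H M H N).toLinearMap ∘ₗ
      (TensorProduct.map SM.coactL SN.coactL)

/-- The tensor-product right coaction on `M ⊗ N`:
`m ⊗ n ↦ Σ (m₍₀₎ ⊗ n₍₀₎) ⊗ m₍₁₎n₍₁₎`. -/
def tensorCoactR (SM : HopfBimoduleStr K H M) (SN : HopfBimoduleStr K H N) :
    M ⊗[K] N →ₗ[K] (M ⊗[K] N) ⊗[K] H :=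
  (TensorProduct.map LinearMap.id (LinearMap.mul' K H)) ∘ₗ
    (TensorProduct.tensorTensorTensorComm K M H N H).toLinearMap ∘ₗ
      (TensorProduct.map SM.coactR SN.coactR)

/-! ### Auxiliary development -/

open LinearMap Coalgebra

set_option maxHeartbeats 1000000
set_option synthInstance.maxHeartbeats 200000

section Aux

lemma cancel_surj {A B C : Type} [AddCommGroup A] [AddCommGroup B] [AddCommGroup C]
    [Module K A] [Module K B] [Module K C] (s : A →ₗ[K] B) (hs : Function.Surjective s)
    {f g : B →ₗ[K] C} (h : f ∘ₗ s = g ∘ₗ s) : f = g :=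
  LinearMap.ext fun b => by obtain ⟨a, rfl⟩ := hs b; exact LinearMap.congr_fun h a

/-- `gL ((a ⊗ m) ⊗ (c ⊗ n)) = a*c ⊗ (m ⊗ n)`. -/
def gL : (H ⊗[K] M) ⊗[K] (H ⊗[K] N) →ₗ[K] H ⊗[K] (M ⊗[K] N) :=
  (TensorProduct.map (LinearMap.mul' K H) LinearMap.id) ∘ₗ
    (TensorProduct.tensorTensorTensorComm K H M H N).toLinearMap

@[simp] lemma gL_tmul (a : H) (m : M) (c : H) (n : N) :
    gL ((a ⊗ₜ[K] m) ⊗ₜ[K] (c ⊗ₜ[K] n)) = (a * c) ⊗ₜ[K] (m ⊗ₜ[K] n) := by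
  simp [gL]

/-- `gR ((m ⊗ a) ⊗ (n ⊗ c)) = (m ⊗ n) ⊗ a*c`. -/
def gR : (M ⊗[K] H) ⊗[K] (N ⊗[K] H) →ₗ[K] (M ⊗[K] N) ⊗[K] H :=
  (TensorProduct.map LinearMap.id (LinearMap.mul' K H)) ∘ₗ
    (TensorProduct.tensorTensorTensorComm K M H N H).toLinearMap

@[simp] lemma gR_tmul (m : M) (a : H) (n : N) (c : H) :
    gR ((m ⊗ₜ[K] a) ⊗ₜ[K] (n ⊗ₜ[K] c)) = (m ⊗ₜ[K] n) ⊗ₜ[K] (a * c) := by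
  simp [gR]

variable (SM : HopfBimoduleStr K H M) (SN : HopfBimoduleStr K H N)

lemma rel_le_ker {X : Type} [AddCommGroup X] [Module K X] (f : M ⊗[K] N →ₗ[K] X)
    (hf : ∀ (m : M) (h : H) (n : N),
      f (SM.actR (m ⊗ₜ[K] h) ⊗ₜ[K] n) = f (m ⊗ₜ[K] SN.actL (h ⊗ₜ[K] n))) :
    tensorOverHRel SM SN ≤ LinearMap.ker f := by
  rw [tensorOverHRel, Submodule.span_le]
  rintro x ⟨m, h, n, rfl⟩
  simp only [SetLike.mem_coe, LinearMap.mem_ker, map_sub, hf, sub_self]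

@[simp] lemma tensorCoactL_tmul (m : M) (n : N) :
    tensorCoactL SM SN (m ⊗ₜ[K] n) = gL (SM.coactL m ⊗ₜ[K] SN.coactL n) := by
  simp [tensorCoactL, gL]

@[simp] lemma tensorCoactR_tmul (m : M) (n : N) :
    tensorCoactR SM SN (m ⊗ₜ[K] n) = gR (SM.coactR m ⊗ₜ[K] SN.coactR n) := by
  simp [tensorCoactR, gR]

/- elementwise forms of the structure axioms -/
section apply
variable {P : Type} [AddCommGroup P] [Module K P] (S : HopfBimoduleStr K H P)

lemma coactL_actL_apply (h : H) (p : P) :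
    S.coactL (S.actL (h ⊗ₜ[K] p)) =
      (TensorProduct.map (LinearMap.mul' K H) S.actL)
        ((TensorProduct.tensorTensorTensorComm K H H H P)
          (Coalgebra.comul (R := K) h ⊗ₜ[K] S.coactL p)) := by
  have := LinearMap.congr_fun S.coactL_actL (h ⊗ₜ[K] p); simpa using this

lemma coactL_actR_apply (p : P) (h : H) :
    S.coactL (S.actR (p ⊗ₜ[K] h)) =
      (TensorProduct.map (LinearMap.mul' K H) S.actR)
        ((TensorProduct.tensorTensorTensorComm K H P H H)
          (S.coactL p ⊗ₜ[K] Coalgebra.comul (R := K) h)) := by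
  have := LinearMap.congr_fun S.coactL_actR (p ⊗ₜ[K] h); simpa using this

lemma coactR_actL_apply (h : H) (p : P) :
    S.coactR (S.actL (h ⊗ₜ[K] p)) =
      (TensorProduct.map S.actL (LinearMap.mul' K H))
        ((TensorProduct.tensorTensorTensorComm K H H P H)
          (Coalgebra.comul (R := K) h ⊗ₜ[K] S.coactR p)) := by
  have := LinearMap.congr_fun S.coactR_actL (h ⊗ₜ[K] p); simpa using this

lemma coactR_actR_apply (p : P) (h : H) :
    S.coactR (S.actR (p ⊗ₜ[K] h)) =
      (TensorProduct.map S.actR (LinearMap.mul' K H))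
        ((TensorProduct.tensorTensorTensorComm K P H H H)
          (S.coactR p ⊗ₜ[K] Coalgebra.comul (R := K) h)) := by
  have := LinearMap.congr_fun S.coactR_actR (p ⊗ₜ[K] h); simpa using this

lemma coactL_counit_apply (p : P) :
    (TensorProduct.lid K P)
      ((LinearMap.rTensor P (Coalgebra.counit (R := K) (A := H))) (S.coactL p)) = p := by
  have := LinearMap.congr_fun S.coactL_counit p; simpa using this

lemma coactR_counit_apply (p : P) :
    (TensorProduct.rid K P)
      ((LinearMap.lTensor P (Coalgebra.counit (R := K) (A := H))) (S.coactR p)) = p := by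
  have := LinearMap.congr_fun S.coactR_counit p; simpa using this

lemma coactL_coassoc_apply (p : P) :
    (LinearMap.rTensor P (Coalgebra.comul (R := K) (A := H))) (S.coactL p) =
      (TensorProduct.assoc K H H P).symm ((LinearMap.lTensor H S.coactL) (S.coactL p)) := by
  have := LinearMap.congr_fun S.coactL_coassoc p; simpa using this

lemma coactR_coassoc_apply (p : P) :
    (LinearMap.lTensor P (Coalgebra.comul (R := K) (A := H))) (S.coactR p) =
      (TensorProduct.assoc K P H H) ((LinearMap.rTensor H S.coactR) (S.coactR p)) := by
  have := LinearMap.congr_fun S.coactR_coassoc p; simpa using this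

lemma coact_comm_apply (p : P) :
    (LinearMap.lTensor H S.coactR) (S.coactL p) =
      (TensorProduct.assoc K H P H) ((LinearMap.rTensor H S.coactL) (S.coactR p)) := by
  have := LinearMap.congr_fun S.coact_comm p; simpa using this

end apply

lemma mkQ_rel (m : M) (h : H) (n : N) :
    (tensorOverHRel SM SN).mkQ (SM.actR (m ⊗ₜ[K] h) ⊗ₜ[K] n) =
      (tensorOverHRel SM SN).mkQ (m ⊗ₜ[K] SN.actL (h ⊗ₜ[K] n)) := by
  rw [← sub_eq_zero, ← map_sub, Submodule.mkQ_apply, Submodule.Quotient.mk_eq_zero]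
  exact Submodule.subset_span ⟨m, h, n, rfl⟩

abbrev QT := (M ⊗[K] N) ⧸ tensorOverHRel SM SN

def AL (SM : HopfBimoduleStr K H M) (SN : HopfBimoduleStr K H N) :
    H ⊗[K] (M ⊗[K] N) →ₗ[K] M ⊗[K] N :=
  LinearMap.rTensor N SM.actL ∘ₗ (TensorProduct.assoc K H M N).symm.toLinearMap

@[simp] lemma AL_tmul (h : H) (m : M) (n : N) :
    AL SM SN (h ⊗ₜ[K] (m ⊗ₜ[K] n)) = SM.actL (h ⊗ₜ[K] m) ⊗ₜ[K] n := by
  simp [AL]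

def AR (SM : HopfBimoduleStr K H M) (SN : HopfBimoduleStr K H N) :
    (M ⊗[K] N) ⊗[K] H →ₗ[K] M ⊗[K] N :=
  LinearMap.lTensor M SN.actR ∘ₗ (TensorProduct.assoc K M N H).toLinearMap

@[simp] lemma AR_tmul (m : M) (n : N) (h : H) :
    AR SM SN ((m ⊗ₜ[K] n) ⊗ₜ[K] h) = m ⊗ₜ[K] SN.actR (n ⊗ₜ[K] h) := by
  simp [AR]

def actL2 (SM : HopfBimoduleStr K H M) (SN : HopfBimoduleStr K H N) (h : H) :
    M ⊗[K] N →ₗ[K] M ⊗[K] N :=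
  LinearMap.rTensor N (SM.actL ∘ₗ TensorProduct.mk K H M h)

@[simp] lemma actL2_tmul (h : H) (m : M) (n : N) :
    actL2 SM SN h (m ⊗ₜ[K] n) = SM.actL (h ⊗ₜ[K] m) ⊗ₜ[K] n := by
  simp [actL2, TensorProduct.mk_apply]

def actR2 (SM : HopfBimoduleStr K H M) (SN : HopfBimoduleStr K H N) (h : H) :
    M ⊗[K] N →ₗ[K] M ⊗[K] N :=
  LinearMap.lTensor M (SN.actR ∘ₗ (TensorProduct.mk K N H).flip h)

@[simp] lemma actR2_tmul (h : H) (m : M) (n : N) :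
    actR2 SM SN h (m ⊗ₜ[K] n) = m ⊗ₜ[K] SN.actR (n ⊗ₜ[K] h) := by
  simp [actR2, TensorProduct.mk_apply]

lemma actL2_wd (h : H) :
    tensorOverHRel SM SN ≤ LinearMap.ker ((tensorOverHRel SM SN).mkQ ∘ₗ actL2 SM SN h) := by
  refine rel_le_ker SM SN _ fun m h' n => ?_
  simp only [LinearMap.comp_apply, actL2_tmul]
  rw [← SM.act_comm, mkQ_rel]

lemma actR2_wd (h : H) :
    tensorOverHRel SM SN ≤ LinearMap.ker ((tensorOverHRel SM SN).mkQ ∘ₗ actR2 SM SN h) := by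
  refine rel_le_ker SM SN _ fun m h' n => ?_
  simp only [LinearMap.comp_apply, actR2_tmul]
  rw [SN.act_comm, ← mkQ_rel]

def qActLaux (h : H) : QT SM SN →ₗ[K] QT SM SN :=
  Submodule.liftQ _ ((tensorOverHRel SM SN).mkQ ∘ₗ actL2 SM SN h) (actL2_wd SM SN h)

@[simp] lemma qActLaux_mk (h : H) (x : M ⊗[K] N) :
    qActLaux SM SN h ((tensorOverHRel SM SN).mkQ x) =
      (tensorOverHRel SM SN).mkQ (actL2 SM SN h x) := rfl

def qActRaux (h : H) : QT SM SN →ₗ[K] QT SM SN :=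
  Submodule.liftQ _ ((tensorOverHRel SM SN).mkQ ∘ₗ actR2 SM SN h) (actR2_wd SM SN h)

@[simp] lemma qActRaux_mk (h : H) (x : M ⊗[K] N) :
    qActRaux SM SN h ((tensorOverHRel SM SN).mkQ x) =
      (tensorOverHRel SM SN).mkQ (actR2 SM SN h x) := rfl

def qActL : H ⊗[K] QT SM SN →ₗ[K] QT SM SN :=
  TensorProduct.lift
    { toFun := fun h => qActLaux SM SN h
      map_add' := by
        intro h h'
        apply LinearMap.ext; intro q
        obtain ⟨x, rfl⟩ := Submodule.mkQ_surjective _ q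
        simp only [qActLaux_mk, LinearMap.add_apply]
        rw [← map_add]; congr 1
        induction x using TensorProduct.induction_on with
        | zero => simp
        | tmul m n => simp [add_tmul]
        | add a b ha hb => simp only [map_add, ha, hb]; abel
      map_smul' := by
        intro c h
        apply LinearMap.ext; intro q
        obtain ⟨x, rfl⟩ := Submodule.mkQ_surjective _ q
        simp only [qActLaux_mk, RingHom.id_apply, LinearMap.smul_apply]
        rw [← map_smul]; congr 1
        induction x using TensorProduct.induction_on with
        | zero => simp
        | tmul m n =>
          simp only [actL2_tmul]
          rw [← smul_tmul', map_smul, smul_tmul']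
        | add a b ha hb => simp only [map_add, ha, hb, smul_add] }

@[simp] lemma qActL_mk (h : H) (x : M ⊗[K] N) :
    qActL SM SN (h ⊗ₜ[K] (tensorOverHRel SM SN).mkQ x) =
      (tensorOverHRel SM SN).mkQ (AL SM SN (h ⊗ₜ[K] x)) := by
  show qActLaux SM SN h ((tensorOverHRel SM SN).mkQ x) = _
  rw [qActLaux_mk]
  congr 1
  induction x using TensorProduct.induction_on with
  | zero => simp
  | tmul m n => simp
  | add a b ha hb => simp only [map_add, tmul_add, ha, hb]

@[simp] lemma qActL_mk' (h : H) (x : M ⊗[K] N) :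
    qActL SM SN (h ⊗ₜ[K] (Submodule.Quotient.mk x : QT SM SN)) =
      Submodule.Quotient.mk (AL SM SN (h ⊗ₜ[K] x)) := qActL_mk SM SN h x

def qActR : QT SM SN ⊗[K] H →ₗ[K] QT SM SN :=
  TensorProduct.lift <| LinearMap.flip
    { toFun := fun h => qActRaux SM SN h
      map_add' := by
        intro h h'
        apply LinearMap.ext; intro q
        obtain ⟨x, rfl⟩ := Submodule.mkQ_surjective _ q
        simp only [qActRaux_mk, LinearMap.add_apply]
        rw [← map_add]; congr 1
        induction x using TensorProduct.induction_on with
        | zero => simp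
        | tmul m n => simp [tmul_add]
        | add a b ha hb => simp only [map_add, ha, hb]; abel
      map_smul' := by
        intro c h
        apply LinearMap.ext; intro q
        obtain ⟨x, rfl⟩ := Submodule.mkQ_surjective _ q
        simp only [qActRaux_mk, RingHom.id_apply, LinearMap.smul_apply]
        rw [← map_smul]; congr 1
        induction x using TensorProduct.induction_on with
        | zero => simp
        | tmul m n =>
          simp only [actR2_tmul]
          rw [tmul_smul, map_smul, tmul_smul]
        | add a b ha hb => simp only [map_add, ha, hb, smul_add] }

@[simp] lemma qActR_mk (x : M ⊗[K] N) (h : H) :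
    qActR SM SN ((tensorOverHRel SM SN).mkQ x ⊗ₜ[K] h) =
      (tensorOverHRel SM SN).mkQ (AR SM SN (x ⊗ₜ[K] h)) := by
  show qActRaux SM SN h ((tensorOverHRel SM SN).mkQ x) = _
  rw [qActRaux_mk]
  congr 1
  induction x using TensorProduct.induction_on with
  | zero => simp
  | tmul m n => simp
  | add a b ha hb => simp only [map_add, add_tmul, ha, hb]


@[simp] lemma qActR_mk' (x : M ⊗[K] N) (h : H) :
    qActR SM SN ((Submodule.Quotient.mk x : QT SM SN) ⊗ₜ[K] h) =
      Submodule.Quotient.mk (AR SM SN (x ⊗ₜ[K] h)) := qActR_mk SM SN x h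

/-! ### Well-definedness of the coactions -/

lemma key3 (x : H ⊗[K] M) (c : H ⊗[K] H) (y : H ⊗[K] N) :
    (LinearMap.lTensor H (tensorOverHRel SM SN).mkQ)
      (gL (((TensorProduct.map (LinearMap.mul' K H) SM.actR)
        ((TensorProduct.tensorTensorTensorComm K H M H H) (x ⊗ₜ[K] c))) ⊗ₜ[K] y)) =
    (LinearMap.lTensor H (tensorOverHRel SM SN).mkQ)
      (gL (x ⊗ₜ[K] ((TensorProduct.map (LinearMap.mul' K H) SN.actL)
        ((TensorProduct.tensorTensorTensorComm K H H H N) (c ⊗ₜ[K] y))))) := by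
  induction x using TensorProduct.induction_on with
  | zero => simp
  | add p q hp hq => simp only [add_tmul, tmul_add, map_add, hp, hq]
  | tmul a m =>
    induction c using TensorProduct.induction_on with
    | zero => simp
    | add p q hp hq => simp only [add_tmul, tmul_add, map_add, hp, hq]
    | tmul b b' =>
      induction y using TensorProduct.induction_on with
      | zero => simp
      | add p q hp hq => simp only [add_tmul, tmul_add, map_add, hp, hq]
      | tmul d n =>
        simp only [tensorTensorTensorComm_tmul, map_tmul, LinearMap.mul'_apply,
          gL_tmul, LinearMap.lTensor_tmul, mul_assoc]
        rw [mkQ_rel]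

lemma key4 (x : M ⊗[K] H) (c : H ⊗[K] H) (y : N ⊗[K] H) :
    (LinearMap.rTensor H (tensorOverHRel SM SN).mkQ)
      (gR (((TensorProduct.map SM.actR (LinearMap.mul' K H))
        ((TensorProduct.tensorTensorTensorComm K M H H H) (x ⊗ₜ[K] c))) ⊗ₜ[K] y)) =
    (LinearMap.rTensor H (tensorOverHRel SM SN).mkQ)
      (gR (x ⊗ₜ[K] ((TensorProduct.map SN.actL (LinearMap.mul' K H))
        ((TensorProduct.tensorTensorTensorComm K H H N H) (c ⊗ₜ[K] y))))) := by
  induction x using TensorProduct.induction_on with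
  | zero => simp
  | add p q hp hq => simp only [add_tmul, tmul_add, map_add, hp, hq]
  | tmul m a =>
    induction c using TensorProduct.induction_on with
    | zero => simp
    | add p q hp hq => simp only [add_tmul, tmul_add, map_add, hp, hq]
    | tmul b b' =>
      induction y using TensorProduct.induction_on with
      | zero => simp
      | add p q hp hq => simp only [add_tmul, tmul_add, map_add, hp, hq]
      | tmul n d =>
        simp only [tensorTensorTensorComm_tmul, map_tmul, LinearMap.mul'_apply,
          gR_tmul, LinearMap.rTensor_tmul, mul_assoc]
        rw [mkQ_rel]

lemma coactL_wd :
    tensorOverHRel SM SN ≤ LinearMap.ker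
      ((LinearMap.lTensor H (tensorOverHRel SM SN).mkQ) ∘ₗ tensorCoactL SM SN) := by
  refine rel_le_ker SM SN _ fun m h n => ?_
  simp only [LinearMap.comp_apply, tensorCoactL_tmul]
  rw [coactL_actR_apply SM, coactL_actL_apply SN, key3]

lemma coactR_wd :
    tensorOverHRel SM SN ≤ LinearMap.ker
      ((LinearMap.rTensor H (tensorOverHRel SM SN).mkQ) ∘ₗ tensorCoactR SM SN) := by
  refine rel_le_ker SM SN _ fun m h n => ?_
  simp only [LinearMap.comp_apply, tensorCoactR_tmul]
  rw [coactR_actR_apply SM, coactR_actL_apply SN, key4]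

def qCoactL : QT SM SN →ₗ[K] H ⊗[K] QT SM SN :=
  Submodule.liftQ _ ((LinearMap.lTensor H (tensorOverHRel SM SN).mkQ) ∘ₗ tensorCoactL SM SN)
    (coactL_wd SM SN)

@[simp] lemma qCoactL_mk (x : M ⊗[K] N) :
    qCoactL SM SN ((tensorOverHRel SM SN).mkQ x) =
      (LinearMap.lTensor H (tensorOverHRel SM SN).mkQ) (tensorCoactL SM SN x) := rfl

@[simp] lemma qCoactL_mk' (x : M ⊗[K] N) :
    qCoactL SM SN (Submodule.Quotient.mk x : QT SM SN) =
      (LinearMap.lTensor H (tensorOverHRel SM SN).mkQ) (tensorCoactL SM SN x) := rfl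

def qCoactR : QT SM SN →ₗ[K] QT SM SN ⊗[K] H :=
  Submodule.liftQ _ ((LinearMap.rTensor H (tensorOverHRel SM SN).mkQ) ∘ₗ tensorCoactR SM SN)
    (coactR_wd SM SN)

@[simp] lemma qCoactR_mk (x : M ⊗[K] N) :
    qCoactR SM SN ((tensorOverHRel SM SN).mkQ x) =
      (LinearMap.rTensor H (tensorOverHRel SM SN).mkQ) (tensorCoactR SM SN x) := rfl

@[simp] lemma qCoactR_mk' (x : M ⊗[K] N) :
    qCoactR SM SN (Submodule.Quotient.mk x : QT SM SN) =
      (LinearMap.rTensor H (tensorOverHRel SM SN).mkQ) (tensorCoactR SM SN x) := rfl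

/-! ### counit, coassociativity, bicomodule keys -/

lemma keyCntL (x : H ⊗[K] M) (y : H ⊗[K] N) :
    (TensorProduct.lid K (QT SM SN))
      ((LinearMap.rTensor (QT SM SN) (Coalgebra.counit (R := K) (A := H)))
        ((LinearMap.lTensor H (tensorOverHRel SM SN).mkQ) (gL (x ⊗ₜ[K] y)))) =
    (tensorOverHRel SM SN).mkQ
      (((TensorProduct.lid K M) ((LinearMap.rTensor M (Coalgebra.counit (R := K) (A := H))) x))
        ⊗ₜ[K]
       ((TensorProduct.lid K N) ((LinearMap.rTensor N (Coalgebra.counit (R := K) (A := H))) y))) := by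
  induction x using TensorProduct.induction_on with
  | zero => simp
  | add p q hp hq => simp only [add_tmul, tmul_add, map_add, hp, hq]
  | tmul a m =>
    induction y using TensorProduct.induction_on with
    | zero => simp
    | add p q hp hq => simp only [add_tmul, tmul_add, map_add, hp, hq]
    | tmul c n => 
      simp only [gL_tmul, LinearMap.lTensor_tmul, LinearMap.rTensor_tmul,
        TensorProduct.lid_tmul, Bialgebra.counit_mul, tmul_smul, ← smul_tmul', map_smul,
        smul_smul, mul_comm]

lemma keyCntR (x : M ⊗[K] H) (y : N ⊗[K] H) :
    (TensorProduct.rid K (QT SM SN))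
      ((LinearMap.lTensor (QT SM SN) (Coalgebra.counit (R := K) (A := H)))
        ((LinearMap.rTensor H (tensorOverHRel SM SN).mkQ) (gR (x ⊗ₜ[K] y)))) =
    (tensorOverHRel SM SN).mkQ
      (((TensorProduct.rid K M) ((LinearMap.lTensor M (Coalgebra.counit (R := K) (A := H))) x))
        ⊗ₜ[K]
       ((TensorProduct.rid K N) ((LinearMap.lTensor N (Coalgebra.counit (R := K) (A := H))) y))) := by
  induction x using TensorProduct.induction_on with
  | zero => simp
  | add p q hp hq => simp only [add_tmul, tmul_add, map_add, hp, hq]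
  | tmul m a =>
    induction y using TensorProduct.induction_on with
    | zero => simp
    | add p q hp hq => simp only [add_tmul, tmul_add, map_add, hp, hq]
    | tmul n c =>
      simp only [gR_tmul, LinearMap.lTensor_tmul, LinearMap.rTensor_tmul,
        TensorProduct.rid_tmul, Bialgebra.counit_mul, tmul_smul, ← smul_tmul', map_smul,
        smul_smul, mul_comm]

def WL : ((H ⊗[K] H) ⊗[K] M) ⊗[K] ((H ⊗[K] H) ⊗[K] N) →ₗ[K] (H ⊗[K] H) ⊗[K] QT SM SN :=
  (TensorProduct.map (LinearMap.mul' K (H ⊗[K] H)) (tensorOverHRel SM SN).mkQ) ∘ₗ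
    (TensorProduct.tensorTensorTensorComm K (H ⊗[K] H) M (H ⊗[K] H) N).toLinearMap

@[simp] lemma WL_tmul (u : H ⊗[K] H) (m : M) (v : H ⊗[K] H) (n : N) :
    WL SM SN ((u ⊗ₜ[K] m) ⊗ₜ[K] (v ⊗ₜ[K] n)) =
      (u * v) ⊗ₜ[K] (tensorOverHRel SM SN).mkQ (m ⊗ₜ[K] n) := by
  simp [WL]

def WR : (M ⊗[K] (H ⊗[K] H)) ⊗[K] (N ⊗[K] (H ⊗[K] H)) →ₗ[K] QT SM SN ⊗[K] (H ⊗[K] H) :=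
  (TensorProduct.map (tensorOverHRel SM SN).mkQ (LinearMap.mul' K (H ⊗[K] H))) ∘ₗ
    (TensorProduct.tensorTensorTensorComm K M (H ⊗[K] H) N (H ⊗[K] H)).toLinearMap

@[simp] lemma WR_tmul (m : M) (u : H ⊗[K] H) (n : N) (v : H ⊗[K] H) :
    WR SM SN ((m ⊗ₜ[K] u) ⊗ₜ[K] (n ⊗ₜ[K] v)) =
      (tensorOverHRel SM SN).mkQ (m ⊗ₜ[K] n) ⊗ₜ[K] (u * v) := by
  simp [WR]

lemma keyCoL1 (x : H ⊗[K] M) (y : H ⊗[K] N) :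
    (LinearMap.rTensor (QT SM SN) (Coalgebra.comul (R := K) (A := H)))
      ((LinearMap.lTensor H (tensorOverHRel SM SN).mkQ) (gL (x ⊗ₜ[K] y))) =
    WL SM SN (((LinearMap.rTensor M (Coalgebra.comul (R := K) (A := H))) x) ⊗ₜ[K]
      ((LinearMap.rTensor N (Coalgebra.comul (R := K) (A := H))) y)) := by
  induction x using TensorProduct.induction_on with
  | zero => simp
  | add p q hp hq => simp only [add_tmul, tmul_add, map_add, hp, hq]
  | tmul a m =>
    induction y using TensorProduct.induction_on with
    | zero => simp
    | add p q hp hq => simp only [add_tmul, tmul_add, map_add, hp, hq]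
    | tmul c n => 
      simp [Bialgebra.comul_mul]

lemma keyCoL2 (a c : H) (s : H ⊗[K] M) (t : H ⊗[K] N) :
    (TensorProduct.assoc K H H (QT SM SN)).symm
      ((a * c) ⊗ₜ[K] ((LinearMap.lTensor H (tensorOverHRel SM SN).mkQ) (gL (s ⊗ₜ[K] t)))) =
    WL SM SN (((TensorProduct.assoc K H H M).symm (a ⊗ₜ[K] s)) ⊗ₜ[K]
      ((TensorProduct.assoc K H H N).symm (c ⊗ₜ[K] t))) := by
  induction s using TensorProduct.induction_on with
  | zero => simp
  | add p q hp hq => simp only [add_tmul, tmul_add, map_add, hp, hq]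
  | tmul b m =>
    induction t using TensorProduct.induction_on with
    | zero => simp
    | add p q hp hq => simp only [add_tmul, tmul_add, map_add, hp, hq]
    | tmul d n =>
      simp [Algebra.TensorProduct.tmul_mul_tmul]

lemma keyCoL3 (x : H ⊗[K] M) (y : H ⊗[K] N) :
    (TensorProduct.assoc K H H (QT SM SN)).symm
      ((LinearMap.lTensor H
          ((LinearMap.lTensor H (tensorOverHRel SM SN).mkQ) ∘ₗ tensorCoactL SM SN))
        (gL (x ⊗ₜ[K] y))) =
    WL SM SN (((TensorProduct.assoc K H H M).symm ((LinearMap.lTensor H SM.coactL) x)) ⊗ₜ[K]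
      ((TensorProduct.assoc K H H N).symm ((LinearMap.lTensor H SN.coactL) y))) := by
  induction x using TensorProduct.induction_on with
  | zero => simp
  | add p q hp hq => simp only [add_tmul, tmul_add, map_add, hp, hq]
  | tmul a m =>
    induction y using TensorProduct.induction_on with
    | zero => simp
    | add p q hp hq => simp only [add_tmul, tmul_add, map_add, hp, hq]
    | tmul c n => 
      simp only [gL_tmul, LinearMap.lTensor_tmul, LinearMap.comp_apply, tensorCoactL_tmul]
      exact keyCoL2 SM SN a c (SM.coactL m) (SN.coactL n)

lemma keyCoR1 (x : M ⊗[K] H) (y : N ⊗[K] H) :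
    (LinearMap.lTensor (QT SM SN) (Coalgebra.comul (R := K) (A := H)))
      ((LinearMap.rTensor H (tensorOverHRel SM SN).mkQ) (gR (x ⊗ₜ[K] y))) =
    WR SM SN (((LinearMap.lTensor M (Coalgebra.comul (R := K) (A := H))) x) ⊗ₜ[K]
      ((LinearMap.lTensor N (Coalgebra.comul (R := K) (A := H))) y)) := by
  induction x using TensorProduct.induction_on with
  | zero => simp
  | add p q hp hq => simp only [add_tmul, tmul_add, map_add, hp, hq]
  | tmul m a =>
    induction y using TensorProduct.induction_on with
    | zero => simp
    | add p q hp hq => simp only [add_tmul, tmul_add, map_add, hp, hq]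
    | tmul n c =>
      simp [Bialgebra.comul_mul]

lemma keyCoR2 (a c : H) (s : M ⊗[K] H) (t : N ⊗[K] H) :
    (TensorProduct.assoc K (QT SM SN) H H)
      (((LinearMap.rTensor H (tensorOverHRel SM SN).mkQ) (gR (s ⊗ₜ[K] t))) ⊗ₜ[K] (a * c)) =
    WR SM SN (((TensorProduct.assoc K M H H) (s ⊗ₜ[K] a)) ⊗ₜ[K]
      ((TensorProduct.assoc K N H H) (t ⊗ₜ[K] c))) := by
  induction s using TensorProduct.induction_on with
  | zero => simp
  | add p q hp hq => simp only [add_tmul, tmul_add, map_add, hp, hq]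
  | tmul m b =>
    induction t using TensorProduct.induction_on with
    | zero => simp
    | add p q hp hq => simp only [add_tmul, tmul_add, map_add, hp, hq]
    | tmul n d =>
      simp [Algebra.TensorProduct.tmul_mul_tmul]

lemma keyCoR3 (x : M ⊗[K] H) (y : N ⊗[K] H) :
    (TensorProduct.assoc K (QT SM SN) H H)
      ((LinearMap.rTensor H
          ((LinearMap.rTensor H (tensorOverHRel SM SN).mkQ) ∘ₗ tensorCoactR SM SN))
        (gR (x ⊗ₜ[K] y))) =
    WR SM SN (((TensorProduct.assoc K M H H) ((LinearMap.rTensor H SM.coactR) x)) ⊗ₜ[K]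
      ((TensorProduct.assoc K N H H) ((LinearMap.rTensor H SN.coactR) y))) := by
  induction x using TensorProduct.induction_on with
  | zero => simp
  | add p q hp hq => simp only [add_tmul, tmul_add, map_add, hp, hq]
  | tmul m a =>
    induction y using TensorProduct.induction_on with
    | zero => simp
    | add p q hp hq => simp only [add_tmul, tmul_add, map_add, hp, hq]
    | tmul n c =>
      simp only [gR_tmul, LinearMap.rTensor_tmul, LinearMap.comp_apply, tensorCoactR_tmul]
      exact keyCoR2 SM SN a c (SM.coactR m) (SN.coactR n)

def TCl : (H ⊗[K] (M ⊗[K] H)) ⊗[K] (H ⊗[K] (N ⊗[K] H)) →ₗ[K] H ⊗[K] (QT SM SN ⊗[K] H) :=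
  (TensorProduct.map (LinearMap.mul' K H) ((LinearMap.rTensor H (tensorOverHRel SM SN).mkQ) ∘ₗ gR)) ∘ₗ
    (TensorProduct.tensorTensorTensorComm K H (M ⊗[K] H) H (N ⊗[K] H)).toLinearMap

@[simp] lemma TCl_tmul (a : H) (u : M ⊗[K] H) (c : H) (v : N ⊗[K] H) :
    TCl SM SN ((a ⊗ₜ[K] u) ⊗ₜ[K] (c ⊗ₜ[K] v)) =
      (a * c) ⊗ₜ[K] ((LinearMap.rTensor H (tensorOverHRel SM SN).mkQ) (gR (u ⊗ₜ[K] v))) := by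
  simp [TCl]

def TCr : ((H ⊗[K] M) ⊗[K] H) ⊗[K] ((H ⊗[K] N) ⊗[K] H) →ₗ[K] H ⊗[K] (QT SM SN ⊗[K] H) :=
  (TensorProduct.assoc K H (QT SM SN) H).toLinearMap ∘ₗ
    (TensorProduct.map ((LinearMap.lTensor H (tensorOverHRel SM SN).mkQ) ∘ₗ gL) (LinearMap.mul' K H)) ∘ₗ
      (TensorProduct.tensorTensorTensorComm K (H ⊗[K] M) H (H ⊗[K] N) H).toLinearMap

@[simp] lemma TCr_tmul (u : H ⊗[K] M) (b : H) (v : H ⊗[K] N) (d : H) :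
    TCr SM SN ((u ⊗ₜ[K] b) ⊗ₜ[K] (v ⊗ₜ[K] d)) =
      (TensorProduct.assoc K H (QT SM SN) H)
        (((LinearMap.lTensor H (tensorOverHRel SM SN).mkQ) (gL (u ⊗ₜ[K] v))) ⊗ₜ[K] (b * d)) := by
  simp [TCr]

lemma keyCC1 (x : H ⊗[K] M) (y : H ⊗[K] N) :
    (LinearMap.lTensor H
        ((LinearMap.rTensor H (tensorOverHRel SM SN).mkQ) ∘ₗ tensorCoactR SM SN))
      (gL (x ⊗ₜ[K] y)) =
    TCl SM SN (((LinearMap.lTensor H SM.coactR) x) ⊗ₜ[K] ((LinearMap.lTensor H SN.coactR) y)) := by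
  induction x using TensorProduct.induction_on with
  | zero => simp
  | add p q hp hq => simp only [add_tmul, tmul_add, map_add, hp, hq]
  | tmul a m =>
    induction y using TensorProduct.induction_on with
    | zero => simp
    | add p q hp hq => simp only [add_tmul, tmul_add, map_add, hp, hq]
    | tmul c n => 
      simp

lemma keyCC2 (x : M ⊗[K] H) (y : N ⊗[K] H) :
    (TensorProduct.assoc K H (QT SM SN) H)
      ((LinearMap.rTensor H
          ((LinearMap.lTensor H (tensorOverHRel SM SN).mkQ) ∘ₗ tensorCoactL SM SN))
        (gR (x ⊗ₜ[K] y))) =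
    TCr SM SN (((LinearMap.rTensor H SM.coactL) x) ⊗ₜ[K] ((LinearMap.rTensor H SN.coactL) y)) := by
  induction x using TensorProduct.induction_on with
  | zero => simp
  | add p q hp hq => simp only [add_tmul, tmul_add, map_add, hp, hq]
  | tmul m a =>
    induction y using TensorProduct.induction_on with
    | zero => simp
    | add p q hp hq => simp only [add_tmul, tmul_add, map_add, hp, hq]
    | tmul n c =>
      simp

lemma keyCC3 (u : (H ⊗[K] M) ⊗[K] H) (v : (H ⊗[K] N) ⊗[K] H) :
    TCl SM SN (((TensorProduct.assoc K H M H) u) ⊗ₜ[K] ((TensorProduct.assoc K H N H) v)) =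
    TCr SM SN (u ⊗ₜ[K] v) := by
  induction u using TensorProduct.induction_on with
  | zero => simp
  | add p q hp hq => simp only [add_tmul, tmul_add, map_add, hp, hq]
  | tmul x b =>
    induction x using TensorProduct.induction_on with
    | zero => simp
    | add p q hp hq => simp only [add_tmul, tmul_add, map_add, hp, hq]
    | tmul a m =>
      induction v using TensorProduct.induction_on with
      | zero => simp
      | add p q hp hq => simp only [add_tmul, tmul_add, map_add, hp, hq]
      | tmul y d =>
        induction y using TensorProduct.induction_on with
        | zero => simp
        | add p q hp hq => simp only [add_tmul, tmul_add, map_add, hp, hq]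
        | tmul c n => simp

/-! ### compatibility keys -/

lemma keyA1 (c : H ⊗[K] H) (x : H ⊗[K] M) (y : H ⊗[K] N) :
    gL (((TensorProduct.map (LinearMap.mul' K H) SM.actL)
        ((TensorProduct.tensorTensorTensorComm K H H H M) (c ⊗ₜ[K] x))) ⊗ₜ[K] y) =
    (TensorProduct.map (LinearMap.mul' K H) (AL SM SN))
      ((TensorProduct.tensorTensorTensorComm K H H H (M ⊗[K] N)) (c ⊗ₜ[K] gL (x ⊗ₜ[K] y))) := by
  induction c using TensorProduct.induction_on with
  | zero => simp
  | add p q hp hq => simp only [add_tmul, tmul_add, map_add, hp, hq]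
  | tmul a b =>
    induction x using TensorProduct.induction_on with
    | zero => simp
    | add p q hp hq => simp only [add_tmul, tmul_add, map_add, hp, hq]
    | tmul a' m =>
      induction y using TensorProduct.induction_on with
      | zero => simp
      | add p q hp hq => simp only [add_tmul, tmul_add, map_add, hp, hq]
      | tmul d n =>
        simp [mul_assoc]

lemma keyA1q (c : H ⊗[K] H) (z : H ⊗[K] (M ⊗[K] N)) :
    (TensorProduct.map (LinearMap.mul' K H) (qActL SM SN))
      ((TensorProduct.tensorTensorTensorComm K H H H (QT SM SN))
        (c ⊗ₜ[K] (LinearMap.lTensor H (tensorOverHRel SM SN).mkQ) z)) =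
    (LinearMap.lTensor H (tensorOverHRel SM SN).mkQ)
      ((TensorProduct.map (LinearMap.mul' K H) (AL SM SN))
        ((TensorProduct.tensorTensorTensorComm K H H H (M ⊗[K] N)) (c ⊗ₜ[K] z))) := by
  induction c using TensorProduct.induction_on with
  | zero => simp
  | add p q hp hq => simp only [add_tmul, tmul_add, map_add, hp, hq]
  | tmul a b =>
    induction z using TensorProduct.induction_on with
    | zero => simp
    | add p q hp hq => simp only [add_tmul, tmul_add, map_add, hp, hq]
    | tmul h' w =>
      simp

lemma keyA2 (x : H ⊗[K] M) (y : H ⊗[K] N) (c : H ⊗[K] H) :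
    gL (x ⊗ₜ[K] ((TensorProduct.map (LinearMap.mul' K H) SN.actR)
        ((TensorProduct.tensorTensorTensorComm K H N H H) (y ⊗ₜ[K] c)))) =
    (TensorProduct.map (LinearMap.mul' K H) (AR SM SN))
      ((TensorProduct.tensorTensorTensorComm K H (M ⊗[K] N) H H)
        ((gL (x ⊗ₜ[K] y)) ⊗ₜ[K] c)) := by
  induction c using TensorProduct.induction_on with
  | zero => simp
  | add p q hp hq => simp only [add_tmul, tmul_add, map_add, hp, hq]
  | tmul b b' =>
    induction x using TensorProduct.induction_on with
    | zero => simp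
    | add p q hp hq => simp only [add_tmul, tmul_add, map_add, hp, hq]
    | tmul a m =>
      induction y using TensorProduct.induction_on with
      | zero => simp
      | add p q hp hq => simp only [add_tmul, tmul_add, map_add, hp, hq]
      | tmul a' n =>
        simp [mul_assoc]

lemma keyA2q (z : H ⊗[K] (M ⊗[K] N)) (c : H ⊗[K] H) :
    (TensorProduct.map (LinearMap.mul' K H) (qActR SM SN))
      ((TensorProduct.tensorTensorTensorComm K H (QT SM SN) H H)
        (((LinearMap.lTensor H (tensorOverHRel SM SN).mkQ) z) ⊗ₜ[K] c)) =
    (LinearMap.lTensor H (tensorOverHRel SM SN).mkQ)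
      ((TensorProduct.map (LinearMap.mul' K H) (AR SM SN))
        ((TensorProduct.tensorTensorTensorComm K H (M ⊗[K] N) H H) (z ⊗ₜ[K] c))) := by
  induction c using TensorProduct.induction_on with
  | zero => simp
  | add p q hp hq => simp only [add_tmul, tmul_add, map_add, hp, hq]
  | tmul a b =>
    induction z using TensorProduct.induction_on with
    | zero => simp
    | add p q hp hq => simp only [add_tmul, tmul_add, map_add, hp, hq]
    | tmul h' w =>
      simp

lemma keyA3 (c : H ⊗[K] H) (x : M ⊗[K] H) (y : N ⊗[K] H) :
    gR (((TensorProduct.map SM.actL (LinearMap.mul' K H))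
        ((TensorProduct.tensorTensorTensorComm K H H M H) (c ⊗ₜ[K] x))) ⊗ₜ[K] y) =
    (TensorProduct.map (AL SM SN) (LinearMap.mul' K H))
      ((TensorProduct.tensorTensorTensorComm K H H (M ⊗[K] N) H) (c ⊗ₜ[K] gR (x ⊗ₜ[K] y))) := by
  induction c using TensorProduct.induction_on with
  | zero => simp
  | add p q hp hq => simp only [add_tmul, tmul_add, map_add, hp, hq]
  | tmul a b =>
    induction x using TensorProduct.induction_on with
    | zero => simp
    | add p q hp hq => simp only [add_tmul, tmul_add, map_add, hp, hq]
    | tmul m b1 =>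
      induction y using TensorProduct.induction_on with
      | zero => simp
      | add p q hp hq => simp only [add_tmul, tmul_add, map_add, hp, hq]
      | tmul n d =>
        simp [mul_assoc]

lemma keyA3q (c : H ⊗[K] H) (z : (M ⊗[K] N) ⊗[K] H) :
    (TensorProduct.map (qActL SM SN) (LinearMap.mul' K H))
      ((TensorProduct.tensorTensorTensorComm K H H (QT SM SN) H)
        (c ⊗ₜ[K] (LinearMap.rTensor H (tensorOverHRel SM SN).mkQ) z)) =
    (LinearMap.rTensor H (tensorOverHRel SM SN).mkQ)
      ((TensorProduct.map (AL SM SN) (LinearMap.mul' K H))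
        ((TensorProduct.tensorTensorTensorComm K H H (M ⊗[K] N) H) (c ⊗ₜ[K] z))) := by
  induction c using TensorProduct.induction_on with
  | zero => simp
  | add p q hp hq => simp only [add_tmul, tmul_add, map_add, hp, hq]
  | tmul a b =>
    induction z using TensorProduct.induction_on with
    | zero => simp
    | add p q hp hq => simp only [add_tmul, tmul_add, map_add, hp, hq]
    | tmul w h' =>
      simp

lemma keyA4 (x : M ⊗[K] H) (y : N ⊗[K] H) (c : H ⊗[K] H) :
    gR (x ⊗ₜ[K] ((TensorProduct.map SN.actR (LinearMap.mul' K H))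
        ((TensorProduct.tensorTensorTensorComm K N H H H) (y ⊗ₜ[K] c)))) =
    (TensorProduct.map (AR SM SN) (LinearMap.mul' K H))
      ((TensorProduct.tensorTensorTensorComm K (M ⊗[K] N) H H H)
        ((gR (x ⊗ₜ[K] y)) ⊗ₜ[K] c)) := by
  induction c using TensorProduct.induction_on with
  | zero => simp
  | add p q hp hq => simp only [add_tmul, tmul_add, map_add, hp, hq]
  | tmul b b' =>
    induction x using TensorProduct.induction_on with
    | zero => simp
    | add p q hp hq => simp only [add_tmul, tmul_add, map_add, hp, hq]
    | tmul m a =>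
      induction y using TensorProduct.induction_on with
      | zero => simp
      | add p q hp hq => simp only [add_tmul, tmul_add, map_add, hp, hq]
      | tmul n a' =>
        simp [mul_assoc]

lemma keyA4q (z : (M ⊗[K] N) ⊗[K] H) (c : H ⊗[K] H) :
    (TensorProduct.map (qActR SM SN) (LinearMap.mul' K H))
      ((TensorProduct.tensorTensorTensorComm K (QT SM SN) H H H)
        (((LinearMap.rTensor H (tensorOverHRel SM SN).mkQ) z) ⊗ₜ[K] c)) =
    (LinearMap.rTensor H (tensorOverHRel SM SN).mkQ)
      ((TensorProduct.map (AR SM SN) (LinearMap.mul' K H))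
        ((TensorProduct.tensorTensorTensorComm K (M ⊗[K] N) H H H) (z ⊗ₜ[K] c))) := by
  induction c using TensorProduct.induction_on with
  | zero => simp
  | add p q hp hq => simp only [add_tmul, tmul_add, map_add, hp, hq]
  | tmul a b =>
    induction z using TensorProduct.induction_on with
    | zero => simp
    | add p q hp hq => simp only [add_tmul, tmul_add, map_add, hp, hq]
    | tmul w h' =>
      simp

end Aux

theorem tensorProduct_over_H_hopfBimodule
    (SM : HopfBimoduleStr K H M) (SN : HopfBimoduleStr K H N)
    (hS : Function.Bijective (HopfAlgebra.antipode (R := K) (A := H))) :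
    ∃ U : HopfBimoduleStr K H ((M ⊗[K] N) ⧸ tensorOverHRel SM SN),
      -- the left action is induced by the left action on `M`
      (U.actL ∘ₗ LinearMap.lTensor H (tensorOverHRel SM SN).mkQ =
        (tensorOverHRel SM SN).mkQ ∘ₗ (LinearMap.rTensor N SM.actL) ∘ₗ
          (TensorProduct.assoc K H M N).symm.toLinearMap) ∧
      -- the right action is induced by the right action on `N`
      (U.actR ∘ₗ LinearMap.rTensor H (tensorOverHRel SM SN).mkQ =
        (tensorOverHRel SM SN).mkQ ∘ₗ (LinearMap.lTensor M SN.actR) ∘ₗ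
          (TensorProduct.assoc K M N H).toLinearMap) ∧
      -- the tensor-product left coaction descends to the quotient `M ⊗_H N`
      (U.coactL ∘ₗ (tensorOverHRel SM SN).mkQ =
        (LinearMap.lTensor H (tensorOverHRel SM SN).mkQ) ∘ₗ tensorCoactL SM SN) ∧
      -- the tensor-product right coaction descends to the quotient `M ⊗_H N`
      (U.coactR ∘ₗ (tensorOverHRel SM SN).mkQ =
        (LinearMap.rTensor H (tensorOverHRel SM SN).mkQ) ∘ₗ tensorCoactR SM SN) := by
  refine ⟨{
    actL := qActL SM SN
    actR := qActR SM SN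
    coactL := qCoactL SM SN
    coactR := qCoactR SM SN
    actL_one := ?_
    actL_mul := ?_
    actR_one := ?_
    actR_mul := ?_
    act_comm := ?_
    coactL_counit := ?_
    coactR_counit := ?_
    coactL_coassoc := ?_
    coactR_coassoc := ?_
    coact_comm := ?_
    coactL_actL := ?_
    coactL_actR := ?_
    coactR_actL := ?_
    coactR_actR := ?_ }, ?_, ?_, ?_, ?_⟩
  -- actL_one
  · intro q
    obtain ⟨x, rfl⟩ := Submodule.mkQ_surjective _ q
    rw [qActL_mk]
    congr 1
    induction x using TensorProduct.induction_on with
    | zero => simp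
    | add p q hp hq => simp only [tmul_add, map_add, hp, hq]
    | tmul m n => simp [SM.actL_one]
  -- actL_mul
  · intro h h' q
    obtain ⟨x, rfl⟩ := Submodule.mkQ_surjective _ q
    rw [qActL_mk, qActL_mk, qActL_mk]
    congr 1
    induction x using TensorProduct.induction_on with
    | zero => simp
    | add p q hp hq => simp only [tmul_add, map_add, hp, hq]
    | tmul m n => simp [SM.actL_mul]
  -- actR_one
  · intro q
    obtain ⟨x, rfl⟩ := Submodule.mkQ_surjective _ q
    rw [qActR_mk]
    congr 1
    induction x using TensorProduct.induction_on with
    | zero => simp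
    | add p q hp hq => simp only [add_tmul, map_add, hp, hq]
    | tmul m n => simp [SN.actR_one]
  -- actR_mul
  · intro q h h'
    obtain ⟨x, rfl⟩ := Submodule.mkQ_surjective _ q
    rw [qActR_mk, qActR_mk, qActR_mk]
    congr 1
    induction x using TensorProduct.induction_on with
    | zero => simp
    | add p q hp hq => simp only [add_tmul, map_add, hp, hq]
    | tmul m n => simp [SN.actR_mul]
  -- act_comm
  · intro h q h'
    obtain ⟨x, rfl⟩ := Submodule.mkQ_surjective _ q
    rw [qActL_mk, qActR_mk, qActR_mk, qActL_mk]
    congr 1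
    induction x using TensorProduct.induction_on with
    | zero => simp
    | add p q hp hq => simp only [tmul_add, add_tmul, map_add, hp, hq]
    | tmul m n => simp
  -- coactL_counit
  · apply Submodule.linearMap_qext
    apply TensorProduct.ext'
    intro m n
    simp only [LinearMap.comp_apply, LinearEquiv.coe_coe, LinearMap.id_coe, id_eq,
      Submodule.mkQ_apply, qCoactL_mk', tensorCoactL_tmul]
    rw [keyCntL, coactL_counit_apply SM, coactL_counit_apply SN]
    rfl
  -- coactR_counit
  · apply Submodule.linearMap_qext
    apply TensorProduct.ext'
    intro m n
    simp only [LinearMap.comp_apply, LinearEquiv.coe_coe, LinearMap.id_coe, id_eq,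
      Submodule.mkQ_apply, qCoactR_mk', tensorCoactR_tmul]
    rw [keyCntR, coactR_counit_apply SM, coactR_counit_apply SN]
    rfl
  -- coactL_coassoc
  · apply Submodule.linearMap_qext
    apply TensorProduct.ext'
    intro m n
    simp only [LinearMap.comp_apply, LinearEquiv.coe_coe, Submodule.mkQ_apply,
      qCoactL_mk', tensorCoactL_tmul]
    rw [keyCoL1, coactL_coassoc_apply SM, coactL_coassoc_apply SN, ← keyCoL3,
      ← LinearMap.lTensor_comp_apply]
    have hc : qCoactL SM SN ∘ₗ (tensorOverHRel SM SN).mkQ =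
        (LinearMap.lTensor H (tensorOverHRel SM SN).mkQ) ∘ₗ tensorCoactL SM SN :=
      Submodule.liftQ_mkQ _ _ _
    rw [hc]
  -- coactR_coassoc
  · apply Submodule.linearMap_qext
    apply TensorProduct.ext'
    intro m n
    simp only [LinearMap.comp_apply, LinearEquiv.coe_coe, Submodule.mkQ_apply,
      qCoactR_mk', tensorCoactR_tmul]
    rw [keyCoR1, coactR_coassoc_apply SM, coactR_coassoc_apply SN, ← keyCoR3,
      ← LinearMap.rTensor_comp_apply]
    have hc : qCoactR SM SN ∘ₗ (tensorOverHRel SM SN).mkQ =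
        (LinearMap.rTensor H (tensorOverHRel SM SN).mkQ) ∘ₗ tensorCoactR SM SN :=
      Submodule.liftQ_mkQ _ _ _
    rw [hc]
  -- coact_comm
  · apply Submodule.linearMap_qext
    apply TensorProduct.ext'
    intro m n
    simp only [LinearMap.comp_apply, LinearEquiv.coe_coe, Submodule.mkQ_apply,
      qCoactL_mk', qCoactR_mk', tensorCoactL_tmul, tensorCoactR_tmul]
    have hcL : qCoactL SM SN ∘ₗ (tensorOverHRel SM SN).mkQ =
        (LinearMap.lTensor H (tensorOverHRel SM SN).mkQ) ∘ₗ tensorCoactL SM SN :=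
      Submodule.liftQ_mkQ _ _ _
    have hcR : qCoactR SM SN ∘ₗ (tensorOverHRel SM SN).mkQ =
        (LinearMap.rTensor H (tensorOverHRel SM SN).mkQ) ∘ₗ tensorCoactR SM SN :=
      Submodule.liftQ_mkQ _ _ _
    rw [← LinearMap.lTensor_comp_apply, hcR, keyCC1,
      coact_comm_apply SM, coact_comm_apply SN, keyCC3,
      ← LinearMap.rTensor_comp_apply, hcL, keyCC2]
  -- coactL_actL
  · refine cancel_surj (LinearMap.lTensor H (tensorOverHRel SM SN).mkQ)
      (LinearMap.lTensor_surjective _ (Submodule.mkQ_surjective _)) ?_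
    apply TensorProduct.ext'
    intro h w
    simp only [LinearMap.comp_apply, LinearMap.lTensor_tmul, LinearEquiv.coe_coe]
    induction w using TensorProduct.induction_on with
    | zero => simp
    | add p q hp hq => simp only [map_add, tmul_add, hp, hq]
    | tmul m n =>
      simp only [qActL_mk, AL_tmul, qCoactL_mk, tensorCoactL_tmul, map_tmul]
      rw [coactL_actL_apply SM, keyA1, ← keyA1q]
  -- coactL_actR
  · refine cancel_surj (LinearMap.rTensor H (tensorOverHRel SM SN).mkQ)
      (LinearMap.rTensor_surjective _ (Submodule.mkQ_surjective _)) ?_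
    apply TensorProduct.ext'
    intro w h
    simp only [LinearMap.comp_apply, LinearMap.rTensor_tmul, LinearEquiv.coe_coe]
    induction w using TensorProduct.induction_on with
    | zero => simp
    | add p q hp hq => simp only [map_add, add_tmul, hp, hq]
    | tmul m n =>
      simp only [qActR_mk, AR_tmul, qCoactL_mk, tensorCoactL_tmul, map_tmul]
      rw [coactL_actR_apply SN, keyA2, ← keyA2q]
  -- coactR_actL
  · refine cancel_surj (LinearMap.lTensor H (tensorOverHRel SM SN).mkQ)
      (LinearMap.lTensor_surjective _ (Submodule.mkQ_surjective _)) ?_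
    apply TensorProduct.ext'
    intro h w
    simp only [LinearMap.comp_apply, LinearMap.lTensor_tmul, LinearEquiv.coe_coe]
    induction w using TensorProduct.induction_on with
    | zero => simp
    | add p q hp hq => simp only [map_add, tmul_add, hp, hq]
    | tmul m n =>
      simp only [qActL_mk, AL_tmul, qCoactR_mk, tensorCoactR_tmul, map_tmul]
      rw [coactR_actL_apply SM, keyA3, ← keyA3q]
  -- coactR_actR
  · refine cancel_surj (LinearMap.rTensor H (tensorOverHRel SM SN).mkQ)
      (LinearMap.rTensor_surjective _ (Submodule.mkQ_surjective _)) ?_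
    apply TensorProduct.ext'
    intro w h
    simp only [LinearMap.comp_apply, LinearMap.rTensor_tmul, LinearEquiv.coe_coe]
    induction w using TensorProduct.induction_on with
    | zero => simp
    | add p q hp hq => simp only [map_add, add_tmul, hp, hq]
    | tmul m n =>
      simp only [qActR_mk, AR_tmul, qCoactR_mk, tensorCoactR_tmul, map_tmul]
      rw [coactR_actR_apply SN, keyA4, ← keyA4q]
  -- actL induced
  · apply TensorProduct.ext'
    intro h w
    simp only [LinearMap.comp_apply, LinearMap.lTensor_tmul, LinearEquiv.coe_coe,
      qActL_mk, AL]
  -- actR induced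
  · apply TensorProduct.ext'
    intro w h
    simp only [LinearMap.comp_apply, LinearMap.rTensor_tmul, LinearEquiv.coe_coe,
      qActR_mk, AR]
  -- coactL descends
  · exact Submodule.liftQ_mkQ _ _ _
  -- coactR descends
  · exact Submodule.liftQ_mkQ _ _ _

end
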